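/- arXiv:1901.02617 — 2 statements merged into one kernel-verified Lean document; each statement's English description precedes it below -/
import Mathlib

section
/- Let A and B be Hermitian n×n matrices and let c > 0. Suppose every eigenvalue ε of A satisfies (ε − c/2)² ≥ (c/2)², i.e. ε ≤ 0 or ε ≥ c. If the operator norm ‖B‖ satisfies ‖B‖² + 2‖B‖(‖A‖ + c/2) ≤ (c/2)² − (c/4)², then (A + B − c/2)² ≥ (c/4)² as an operator inequality; in particular A + B has no eigenvalue in the open interval (c/4, 3c/4). -/
/-!
Put `C = A - c/2`. By the continuous functional calculus the gap hypothesis says `C² ≥ (c/2)²`.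
The perturbation changes the square by `(C + B)² - C² = CB + BC + B²`, a self-adjoint operator of
norm at most `‖B‖² + 2‖B‖‖C‖ ≤ (c/2)² - (c/4)²`, so it is bounded below by minus that amount and
`(C + B)² ≥ (c/4)²`. The spectral mapping theorem turns this into the statement on the eigenvalues
of `A + B`. The argument runs in the C⋆-algebra of operators on `EuclideanSpace ℂ (Fin n)`, which
carries both the operator norm and the Loewner order.
-/

open scoped ComplexOrder

section CStarAlgebra

variable {A : Type*} [CStarAlgebra A]

lemma CStarAlgebra.norm_sub_algebraMap_le (a : A) (t : ℝ) :
    ‖a - algebraMap ℝ A t‖ ≤ ‖a‖ + |t| := by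
  refine (norm_sub_le _ _).trans ?_
  gcongr
  cases subsingleton_or_nontrivial A
  · simp [Subsingleton.elim (algebraMap ℝ A t) 0]
  · rw [norm_algebraMap', Real.norm_eq_abs]

namespace IsSelfAdjoint

variable [PartialOrder A] [StarOrderedRing A]

lemma algebraMap_le_sub_algebraMap_sq_iff {a : A} (ha : IsSelfAdjoint a) (s t : ℝ) :
    algebraMap ℝ A s ≤ (a - algebraMap ℝ A t) ^ 2 ↔ ∀ x ∈ spectrum ℝ a, s ≤ (x - t) ^ 2 := by
  have hcfc : (a - algebraMap ℝ A t) ^ 2 = cfc (fun x : ℝ => (x - t) ^ 2) a := by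
    rw [cfc_pow .., cfc_sub .., cfc_id' .., cfc_const ..]
  rw [hcfc, algebraMap_le_cfc_iff ..]

lemma sq_sub_algebraMap_le_add_sq {a b : A} (ha : IsSelfAdjoint a) (hb : IsSelfAdjoint b) :
    a ^ 2 - algebraMap ℝ A (‖b‖ ^ 2 + 2 * ‖b‖ * ‖a‖) ≤ (a + b) ^ 2 := by
  have hd : IsSelfAdjoint ((a + b) ^ 2 - a ^ 2) := ((ha.add hb).pow 2).sub (ha.pow 2)
  have hexp : (a + b) ^ 2 - a ^ 2 = a * b + b * a + b * b := by noncomm_ring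
  have hnorm : ‖(a + b) ^ 2 - a ^ 2‖ ≤ ‖b‖ ^ 2 + 2 * ‖b‖ * ‖a‖ := by
    rw [hexp]
    calc ‖a * b + b * a + b * b‖ ≤ ‖a‖ * ‖b‖ + ‖b‖ * ‖a‖ + ‖b‖ * ‖b‖ :=
          norm_add₃_le.trans
            (add_le_add_three (norm_mul_le _ _) (norm_mul_le _ _) (norm_mul_le _ _))
      _ = ‖b‖ ^ 2 + 2 * ‖b‖ * ‖a‖ := by ring
  calc a ^ 2 - algebraMap ℝ A (‖b‖ ^ 2 + 2 * ‖b‖ * ‖a‖)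
      ≤ a ^ 2 - algebraMap ℝ A ‖(a + b) ^ 2 - a ^ 2‖ := by gcongr
    _ ≤ a ^ 2 + ((a + b) ^ 2 - a ^ 2) := by
        rw [sub_eq_add_neg]; gcongr; exact hd.neg_algebraMap_norm_le_self
    _ = (a + b) ^ 2 := add_sub_cancel _ _

theorem algebraMap_le_add_sub_algebraMap_sq {a b : A} (ha : IsSelfAdjoint a)
    (hb : IsSelfAdjoint b) {r s t : ℝ} (hgap : algebraMap ℝ A r ≤ (a - algebraMap ℝ A t) ^ 2)
    (hnorm : ‖b‖ ^ 2 + 2 * ‖b‖ * (‖a‖ + |t|) ≤ r - s) :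
    algebraMap ℝ A s ≤ (a + b - algebraMap ℝ A t) ^ 2 := by
  have hat : IsSelfAdjoint (a - algebraMap ℝ A t) := ha.sub (.algebraMap A (.all t))
  have hperturb : ‖b‖ ^ 2 + 2 * ‖b‖ * ‖a - algebraMap ℝ A t‖ ≤ r - s := by
    have := CStarAlgebra.norm_sub_algebraMap_le a t
    have := norm_nonneg b
    nlinarith
  calc algebraMap ℝ A s = algebraMap ℝ A r - algebraMap ℝ A (r - s) := by
        rw [map_sub, sub_sub_cancel]
    _ ≤ (a - algebraMap ℝ A t) ^ 2 -
          algebraMap ℝ A (‖b‖ ^ 2 + 2 * ‖b‖ * ‖a - algebraMap ℝ A t‖) := by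
        gcongr
    _ ≤ (a - algebraMap ℝ A t + b) ^ 2 := hat.sq_sub_algebraMap_le_add_sq hb
    _ = (a + b - algebraMap ℝ A t) ^ 2 := by rw [sub_add_eq_add_sub]

end IsSelfAdjoint

end CStarAlgebra

namespace Matrix

variable {n : Type*} [Fintype n] [DecidableEq n]

lemma posSemidef_iff_nonneg_toEuclideanCLM {𝕜 : Type*} [RCLike 𝕜] {M : Matrix n n 𝕜} :
    M.PosSemidef ↔ 0 ≤ toEuclideanCLM (n := n) (𝕜 := 𝕜) M := by
  rw [ContinuousLinearMap.nonneg_iff_isPositive, ← ContinuousLinearMap.isPositive_toLinearMap_iff,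
    coe_toEuclideanCLM_eq_toEuclideanLin, isPositive_toEuclideanLin_iff]

lemma ofReal_mem_spectrum_iff {M : Matrix n n ℂ} {x : ℝ} :
    (x : ℂ) ∈ spectrum ℂ M ↔ x ∈ spectrum ℝ (toEuclideanCLM (n := n) (𝕜 := ℂ) M) := by
  rw [← AlgEquiv.spectrum_eq (toEuclideanCLM (n := n) (𝕜 := ℂ)), ← spectrum.algebraMap_mem_iff ℂ]
  rfl

lemma toEuclideanCLM_ofReal_smul_one (r : ℝ) :
    toEuclideanCLM (n := n) (𝕜 := ℂ) ((r : ℂ) • 1) = algebraMap ℝ _ r := by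
  rw [map_smul, map_one, Algebra.algebraMap_eq_smul_one]
  exact Complex.coe_smul r (1 : EuclideanSpace ℂ n →L[ℂ] EuclideanSpace ℂ n)

end Matrix

/-- Stability of a spectral gap `[0, c]` of a Hermitian matrix `A` under a small
Hermitian perturbation `B`. -/
theorem stmt_2 (n : ℕ) (A B : Matrix (Fin n) (Fin n) ℂ)
    (hA : A.IsHermitian) (hB : B.IsHermitian) (c : ℝ) (hc : 0 < c)
    (hgap : ∀ ε : ℝ, (ε : ℂ) ∈ spectrum ℂ A → (c / 2) ^ 2 ≤ (ε - c / 2) ^ 2)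
    (hnorm : ‖Matrix.toEuclideanCLM (𝕜 := ℂ) B‖ ^ 2 +
        2 * ‖Matrix.toEuclideanCLM (𝕜 := ℂ) B‖ *
          (‖Matrix.toEuclideanCLM (𝕜 := ℂ) A‖ + c / 2) ≤ (c / 2) ^ 2 - (c / 4) ^ 2) :
    ((A + B - ((c / 2 : ℝ) : ℂ) • 1) ^ 2 - (((c / 4) ^ 2 : ℝ) : ℂ) • 1).PosSemidef ∧
      ∀ μ : ℝ, (μ : ℂ) ∈ spectrum ℂ (A + B) → ¬(c / 4 < μ ∧ μ < 3 * c / 4) := by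
  set T := Matrix.toEuclideanCLM (n := Fin n) (𝕜 := ℂ)
  have ha : IsSelfAdjoint (T A) := hA.isSelfAdjoint.map T
  have hb : IsSelfAdjoint (T B) := hB.isSelfAdjoint.map T
  have hgapA : algebraMap ℝ _ ((c / 2) ^ 2) ≤ (T A - algebraMap ℝ _ (c / 2)) ^ 2 :=
    (ha.algebraMap_le_sub_algebraMap_sq_iff _ _).2 fun x hx ↦
      hgap x (Matrix.ofReal_mem_spectrum_iff.2 hx)
  have hgapAB : algebraMap ℝ _ ((c / 4) ^ 2) ≤ (T A + T B - algebraMap ℝ _ (c / 2)) ^ 2 :=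
    ha.algebraMap_le_add_sub_algebraMap_sq hb hgapA (by rwa [abs_of_pos (half_pos hc)])
  refine ⟨?_, fun μ hμ ↦ ?_⟩
  · rwa [Matrix.posSemidef_iff_nonneg_toEuclideanCLM, map_sub, map_pow, map_sub, map_add,
      Matrix.toEuclideanCLM_ofReal_smul_one, Matrix.toEuclideanCLM_ofReal_smul_one, sub_nonneg]
  · rw [Matrix.ofReal_mem_spectrum_iff, map_add] at hμ
    have hμgap := ((ha.add hb).algebraMap_le_sub_algebraMap_sq_iff _ _).1 hgapAB μ hμ
    rintro ⟨hlow, hhigh⟩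
    nlinarith
end

section
/- For every integer g ≥ 1, the sum S(n) = Σ_{j=0}^{n−1} ((n+1)/((j+1)(n−j)))^(g+1) · (j + g − 1)^(g−1)/(g−1)! over j with j + ℓ = n − 1 (ℓ = n−1−j), where each term is symmetrized as min over {j, ℓ}, is bounded uniformly in n: S(n) ≤ J(g) := (π²/3)·2^(g+1)·(g−1)^(g−1)/(g−1)!. Concretely: Σ_{j+ℓ=n−1, j,ℓ≥0} ((n+1)/((j+1)(ℓ+1)))^(g+1) · F(g; j, ℓ) ≤ J(g), where F(g;j,ℓ) = min{(j+g−1)^(g−1)/(g−1)!, (ℓ+g−1)^(g−1)/(g−1)!}. -/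
open Finset Real Nat

/-!
Write `g = k + 1` and `a, b` for the two indices. The term of the pair `(a, b)` with `a ≤ b` is at
most `(2 / (a + 1)) ^ (k + 2) * (a + k) ^ k / k!`, and `a + k ≤ k (a + 1)`, so it is at most
`2 ^ (k + 2) k ^ k / k! / (a + 1) ^ 2`. Bounding each term by the same constant times
`1 / (a + 1) ^ 2 + 1 / (b + 1) ^ 2` and summing, each of the two sums is at most `ζ(2) = π² / 6`.
-/

theorem sum_range_one_div_succ_sq_le_pi_sq_div_six (n : ℕ) :
    ∑ j ∈ range n, 1 / ((j : ℝ) + 1) ^ 2 ≤ π ^ 2 / 6 := by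
  have h := sum_le_hasSum (range (n + 1)) (fun i _ ↦ by positivity) hasSum_zeta_two
  rw [sum_range_succ'] at h
  simpa using h

theorem sum_range_one_div_succ_sq_add_reflect_le (n : ℕ) :
    ∑ j ∈ range n, (1 / ((j : ℝ) + 1) ^ 2 + 1 / (((n - 1 - j : ℕ) : ℝ) + 1) ^ 2) ≤
      π ^ 2 / 3 := by
  rw [sum_add_distrib, sum_range_reflect (fun j ↦ 1 / ((j : ℝ) + 1) ^ 2) n]
  linarith [sum_range_one_div_succ_sq_le_pi_sq_div_six n]

theorem add_natCast_pow_le {x : ℝ} (hx : 0 ≤ x) (k : ℕ) :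
    (x + k) ^ k ≤ (k : ℝ) ^ k * (x + 1) ^ k := by
  rcases k.eq_zero_or_pos with rfl | hk
  · simp
  rw [← mul_pow]
  have hk' : (1 : ℝ) ≤ k := by exact_mod_cast hk
  gcongr
  nlinarith

theorem pair_term_le_of_le {a b : ℝ} (ha : 0 ≤ a) (hab : a ≤ b) (k : ℕ) :
    ((a + 1 + (b + 1)) / ((a + 1) * (b + 1))) ^ (k + 2) *
        min ((a + k) ^ k / k !) ((b + k) ^ k / k !) ≤
      2 ^ (k + 2) * (k : ℝ) ^ k / k ! / (a + 1) ^ 2 := by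
  have hb : 0 ≤ b := ha.trans hab
  have hsum : (a + 1 + (b + 1)) / ((a + 1) * (b + 1)) ≤ 2 / (a + 1) := by
    rw [div_le_div_iff₀ (by positivity) (by positivity)]
    nlinarith
  calc _ ≤ (2 / (a + 1)) ^ (k + 2) * ((k : ℝ) ^ k * (a + 1) ^ k / k !) := by
        gcongr
        exact (min_le_left _ _).trans (by gcongr; exact add_natCast_pow_le ha k)
    _ = 2 ^ (k + 2) * (k : ℝ) ^ k / k ! / (a + 1) ^ 2 := by
        rw [div_pow]
        field_simp
        ring

theorem pair_term_le {a b : ℝ} (ha : 0 ≤ a) (hb : 0 ≤ b) (k : ℕ) :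
    ((a + 1 + (b + 1)) / ((a + 1) * (b + 1))) ^ (k + 2) *
        min ((a + k) ^ k / k !) ((b + k) ^ k / k !) ≤
      2 ^ (k + 2) * (k : ℝ) ^ k / k ! * (1 / (a + 1) ^ 2 + 1 / (b + 1) ^ 2) := by
  rcases le_total a b with hab | hba
  · calc _ ≤ 2 ^ (k + 2) * (k : ℝ) ^ k / k ! / (a + 1) ^ 2 := pair_term_le_of_le ha hab k
      _ ≤ _ := by rw [div_eq_mul_one_div]; gcongr; exact le_add_of_nonneg_right (by positivity)
  · calc _ = ((b + 1 + (a + 1)) / ((b + 1) * (a + 1))) ^ (k + 2) *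
          min ((b + k) ^ k / k !) ((a + k) ^ k / k !) := by
          rw [add_comm (b + 1), mul_comm (b + 1), min_comm]
      _ ≤ 2 ^ (k + 2) * (k : ℝ) ^ k / k ! / (b + 1) ^ 2 := pair_term_le_of_le hb hba k
      _ ≤ _ := by rw [div_eq_mul_one_div]; gcongr; exact le_add_of_nonneg_left (by positivity)

theorem stmt_9_general (g n : ℕ) (hg : 1 ≤ g) :
    ∑ j ∈ Finset.range n,
        (((n : ℝ) + 1) / (((j : ℝ) + 1) * (((n - 1 - j : ℕ) : ℝ) + 1))) ^ (g + 1) *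
          min (((j : ℝ) + g - 1) ^ (g - 1) / (g - 1).factorial)
            ((((n - 1 - j : ℕ) : ℝ) + g - 1) ^ (g - 1) / (g - 1).factorial) ≤
      (Real.pi ^ 2 / 3) * 2 ^ (g + 1) * ((g : ℝ) - 1) ^ (g - 1) / (g - 1).factorial := by
  obtain ⟨k, rfl⟩ := Nat.exists_eq_add_of_le' hg
  have hcast : ∀ x : ℝ, x + ((k + 1 : ℕ) : ℝ) - 1 = x + k := fun x ↦ by push_cast; ring
  simp only [hcast, Nat.add_sub_cancel]
  calc _ ≤ ∑ j ∈ range n, 2 ^ (k + 2) * (k : ℝ) ^ k / k ! *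
          (1 / ((j : ℝ) + 1) ^ 2 + 1 / (((n - 1 - j : ℕ) : ℝ) + 1) ^ 2) := by
        refine sum_le_sum fun j hj ↦ ?_
        have hsplit : (n : ℝ) + 1 = (j : ℝ) + 1 + (((n - 1 - j : ℕ) : ℝ) + 1) := by
          have hjn : ((j + (n - 1 - j) + 1 : ℕ) : ℝ) = n := by
            rw [mem_range] at hj
            congr 1
            omega
          push_cast at hjn
          linarith
        rw [hsplit]
        exact pair_term_le j.cast_nonneg (n - 1 - j).cast_nonneg k
    _ ≤ 2 ^ (k + 2) * (k : ℝ) ^ k / k ! * (π ^ 2 / 3) := by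
        rw [← mul_sum]
        gcongr
        exact sum_range_one_div_succ_sq_add_reflect_le n
    _ = _ := by push_cast; ring

/-- Uniform-in-`n` bound `S(n) ≤ J(g)` on the symmetrized convolution sum
appearing in the perturbation theory:
`Σ_{j+ℓ=n-1} ((n+1)/((j+1)(ℓ+1)))^(g+1) F(g;j,ℓ) ≤ (π²/3) 2^(g+1) (g-1)^(g-1)/(g-1)!`. -/
theorem stmt_9 (g n : ℕ) (hg : 1 ≤ g) (hn : 1 ≤ n) :
    ∑ j ∈ Finset.range n,
        (((n : ℝ) + 1) / (((j : ℝ) + 1) * (((n - 1 - j : ℕ) : ℝ) + 1))) ^ (g + 1) *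
          min (((j : ℝ) + g - 1) ^ (g - 1) / (g - 1).factorial)
            ((((n - 1 - j : ℕ) : ℝ) + g - 1) ^ (g - 1) / (g - 1).factorial) ≤
      (Real.pi ^ 2 / 3) * 2 ^ (g + 1) * ((g : ℝ) - 1) ^ (g - 1) / (g - 1).factorial :=
  stmt_9_general g n hg
end
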